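/- arXiv:2003.11769 — 2 statements merged into one kernel-verified Lean document; each statement's English description precedes it below -/
import Mathlib

section
/- Let Q(θ) := L(θ) + λ‖θ‖_{clip,τ} where L: ℝ^p → ℝ and λ, τ > 0. For a fixed point θ̂, define the surrogate Q*(θ | θ̂) := L(θ) − (λ/τ)⟨h, θ − τ·1⟩ + (λ/τ)‖θ‖_1, where h ∈ ℝ^p has entries h_j = sign(θ̂_j)·1(|θ̂_j| > τ). Then for any θ̃ with Q*(θ̃ | θ̂) ≤ Q*(θ̂ | θ̂), it holds that Q(θ̃) ≤ Q(θ̂). -/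
/-!
Up to the constant `λ Σ h_j`, `Q θ - Q* θ` equals `(λ/τ) Σ_j (min |θ_j| τ - |θ_j| + h_j θ_j)`.
Each summand is the concave part of the clipped penalty minus its tangent at `θ̂_j`, so it is
maximised at `θ = θ̂`; hence any decrease of `Q*` from `θ̂` is a decrease of `Q`.
-/

open Finset

/-- Tangent majorization of the concave part `t ↦ min |t| τ - |t|` of the clipped `L1` penalty. -/
lemma min_abs_sub_abs_add_mul_le (τ t s : ℝ) :
    min |t| τ - |t| + (Real.sign s * if τ < |s| then 1 else 0) * t ≤
      min |s| τ - |s| + (Real.sign s * if τ < |s| then 1 else 0) * s := by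
  split_ifs with hs
  · have hss : Real.sign s * s = |s| := by
      rcases lt_trichotomy s 0 with hneg | rfl | hpos
      · rw [Real.sign_of_neg hneg, abs_of_neg hneg, neg_one_mul]
      · simp
      · rw [Real.sign_of_pos hpos, abs_of_pos hpos, one_mul]
    have hst : Real.sign s * t ≤ |t| := by
      rcases Real.sign_apply_eq s with h | h | h <;> rw [h]
      · simpa using neg_le_abs t
      · simp
      · simpa using le_abs_self t
    rw [min_eq_right hs.le]
    linarith [min_le_right |t| τ]
  · rw [min_eq_left (not_lt.mp hs)]
    linarith [min_le_left |t| τ]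

lemma sum_min_div_one_eq {ι : Type*} (s : Finset ι) (a : ι → ℝ) {τ : ℝ} (hτ : 0 < τ) :
    ∑ j ∈ s, min (a j / τ) 1 = (∑ j ∈ s, min (a j) τ) / τ := by
  rw [sum_div]
  refine sum_congr rfl fun j _ => ?_
  rw [← min_div_div_right hτ.le, div_self hτ.ne']

/-- CCCP surrogate descent implies descent of the original clipped-L1 penalized
objective (Proposition 1 of the paper). -/
theorem cccp_surrogate_descent (p : ℕ) (L : (Fin p → ℝ) → ℝ) (lam τ : ℝ)
    (hlam : 0 < lam) (hτ : 0 < τ)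
    (θhat : Fin p → ℝ)
    (h : Fin p → ℝ) (hh : ∀ j, h j = Real.sign (θhat j) * (if τ < |θhat j| then (1:ℝ) else 0))
    (Q : (Fin p → ℝ) → ℝ)
    (hQ : ∀ θ, Q θ = L θ + lam * ∑ j, min (|θ j| / τ) 1)
    (Qstar : (Fin p → ℝ) → ℝ)
    (hQstar : ∀ θ, Qstar θ =
      L θ - (lam / τ) * (∑ j, h j * (θ j - τ)) + (lam / τ) * ∑ j, |θ j|)
    (θtil : Fin p → ℝ) (hdesc : Qstar θtil ≤ Qstar θhat) :
    Q θtil ≤ Q θhat := by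
  have htangent : ∑ j, (min |θtil j| τ - |θtil j| + h j * θtil j) ≤
      ∑ j, (min |θhat j| τ - |θhat j| + h j * θhat j) :=
    sum_le_sum fun j _ => hh j ▸ min_abs_sub_abs_add_mul_le τ (θtil j) (θhat j)
  have hscaled := mul_le_mul_of_nonneg_left htangent (div_pos hlam hτ).le
  rw [hQstar, hQstar] at hdesc
  rw [hQ, hQ, sum_min_div_one_eq _ _ hτ, sum_min_div_one_eq _ _ hτ, ← mul_comm_div, ← mul_comm_div]
  simp only [sum_add_distrib, sum_sub_distrib, mul_sub, mul_add] at hdesc hscaled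
  linarith
end

section
/- Let ρ: ℝ → ℝ be 1-Lipschitz with ρ(0) = 0. Consider two feedforward neural networks f₁, f₂ on [0,1]^d with the same architecture: L hidden layers, at most N nodes per layer, and all weights and biases bounded in absolute value by B ≥ 1. Then sup_{x ∈ [0,1]^d} |f₁(x) − f₂(x)| ≤ (L+1)·(B(N+1))^{L+1}·‖θ(f₁) − θ(f₂)‖_∞, where θ(f) denotes the concatenated vector of all weights and biases of f. -/
open Finset

/-- The hidden-layer outputs (after activation) of a feedforward network:
`hiddenOut ρ dims W b l x` is `ρ_l ∘ A_l ∘ ⋯ ∘ ρ_1 ∘ A_1 (x)` (and `x` for `l = 0`). -/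
def hiddenOut (ρ : ℝ → ℝ) (dims : ℕ → ℕ)
    (W : (l : ℕ) → Fin (dims (l + 1)) → Fin (dims l) → ℝ)
    (b : (l : ℕ) → Fin (dims (l + 1)) → ℝ) :
    (l : ℕ) → (Fin (dims 0) → ℝ) → Fin (dims l) → ℝ
  | 0, x => x
  | l + 1, x => fun i => ρ (∑ j, W l i j * hiddenOut ρ dims W b l x j + b l i)

/-- The output of the network with `L` hidden layers (final layer affine, no activation). -/
def netOut (ρ : ℝ → ℝ) (dims : ℕ → ℕ)
    (W : (l : ℕ) → Fin (dims (l + 1)) → Fin (dims l) → ℝ)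
    (b : (l : ℕ) → Fin (dims (l + 1)) → ℝ) (L : ℕ)
    (x : Fin (dims 0) → ℝ) (i : Fin (dims (L + 1))) : ℝ :=
  ∑ j, W L i j * hiddenOut ρ dims W b L x j + b L i

/-!
Since `ρ` is 1-Lipschitz with `ρ 0 = 0`, each layer `ρ ∘ A_l` maps inputs bounded by `P ≥ 1` to
outputs bounded by `M P`, where `M = B (N + 1)`; so the hidden activations of layer `l` are
bounded by `M ^ l`. Comparing the two networks layer by layer, the discrepancy `D_l` of the
activations obeys `D_{l+1} ≤ M (D_l + ε M ^ l)` (perturbing the activations, then the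
parameters), whence `D_l ≤ l M ^ l ε`; the affine output layer is one more such step.
-/

lemma abs_sub_le_of_lipschitzWith_one {f : ℝ → ℝ} (hf : LipschitzWith 1 f) (s t : ℝ) :
    |f s - f t| ≤ |s - t| := by
  simpa [Real.dist_eq] using hf.dist_le_mul s t

lemma abs_le_of_lipschitzWith_one {f : ℝ → ℝ} (hf : LipschitzWith 1 f) (hf0 : f 0 = 0) (s : ℝ) :
    |f s| ≤ |s| := by
  simpa [hf0] using abs_sub_le_of_lipschitzWith_one hf s 0

section Affine

variable {ι : Type*} [Fintype ι] {N : ℕ} {B P : ℝ}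

lemma abs_sum_mul_le {w h : ι → ℝ} (hι : Fintype.card ι ≤ N) (hB : 0 ≤ B) (hP : 0 ≤ P)
    (hw : ∀ j, |w j| ≤ B) (hh : ∀ j, |h j| ≤ P) :
    |∑ j, w j * h j| ≤ N * (B * P) :=
  calc |∑ j, w j * h j| ≤ ∑ j, |w j * h j| := abs_sum_le_sum_abs _ _
    _ ≤ ∑ _j : ι, B * P := by
        gcongr with j
        rw [abs_mul]
        exact mul_le_mul (hw j) (hh j) (abs_nonneg _) hB
    _ = Fintype.card ι * (B * P) := by simp
    _ ≤ N * (B * P) := by gcongr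

lemma abs_affine_le {w h : ι → ℝ} {c : ℝ} (hι : Fintype.card ι ≤ N) (hB : 0 ≤ B) (hP : 1 ≤ P)
    (hw : ∀ j, |w j| ≤ B) (hc : |c| ≤ B) (hh : ∀ j, |h j| ≤ P) :
    |∑ j, w j * h j + c| ≤ B * (N + 1) * P :=
  calc |∑ j, w j * h j + c| ≤ |∑ j, w j * h j| + |c| := abs_add_le _ _
    _ ≤ N * (B * P) + B := add_le_add (abs_sum_mul_le hι hB (by linarith) hw hh) hc
    _ ≤ B * (N + 1) * P := by nlinarith

lemma abs_affine_sub_affine_le {w₁ w₂ h₁ h₂ : ι → ℝ} {c₁ c₂ ε D : ℝ}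
    (hι : Fintype.card ι ≤ N) (hB : 1 ≤ B) (hε : 0 ≤ ε) (hP : 1 ≤ P) (hD : 0 ≤ D)
    (hw₁ : ∀ j, |w₁ j| ≤ B) (hw : ∀ j, |w₁ j - w₂ j| ≤ ε) (hc : |c₁ - c₂| ≤ ε)
    (hh₂ : ∀ j, |h₂ j| ≤ P) (hh : ∀ j, |h₁ j - h₂ j| ≤ D) :
    |(∑ j, w₁ j * h₁ j + c₁) - (∑ j, w₂ j * h₂ j + c₂)| ≤ B * (N + 1) * (D + ε * P) := by
  have split : (∑ j, w₁ j * h₁ j + c₁) - (∑ j, w₂ j * h₂ j + c₂)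
      = ∑ j, w₁ j * (h₁ j - h₂ j) + (∑ j, (w₁ j - w₂ j) * h₂ j + (c₁ - c₂)) := by
    simp only [mul_sub, sub_mul, sum_sub_distrib]
    ring
  have hN : (0 : ℝ) ≤ N := N.cast_nonneg
  rw [split]
  calc _ ≤ |∑ j, w₁ j * (h₁ j - h₂ j)| + |∑ j, (w₁ j - w₂ j) * h₂ j + (c₁ - c₂)| :=
        abs_add_le _ _
    _ ≤ N * (B * D) + ε * (N + 1) * P :=
        add_le_add (abs_sum_mul_le hι (by linarith) hD hw₁ hh) (abs_affine_le hι hε hP hw hc hh₂)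
    _ ≤ B * (N + 1) * (D + ε * P) := by
        nlinarith [mul_nonneg (by linarith : (0 : ℝ) ≤ B) hD,
          mul_nonneg (mul_nonneg hε (by linarith : (0 : ℝ) ≤ N + 1)) (by linarith : (0 : ℝ) ≤ P)]

end Affine

section Network

variable {ρ : ℝ → ℝ} {dims : ℕ → ℕ} {N : ℕ} {B ε : ℝ} {x : Fin (dims 0) → ℝ}

theorem abs_hiddenOut_le (hρ : LipschitzWith 1 ρ) (hρ0 : ρ 0 = 0) (hB : 1 ≤ B)
    {W : (l : ℕ) → Fin (dims (l + 1)) → Fin (dims l) → ℝ} {b : (l : ℕ) → Fin (dims (l + 1)) → ℝ}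
    {n : ℕ} (hdims : ∀ l < n, dims l ≤ N) (hW : ∀ l < n, ∀ i j, |W l i j| ≤ B)
    (hb : ∀ l < n, ∀ i, |b l i| ≤ B) (hx : ∀ k, |x k| ≤ 1) (k : Fin (dims n)) :
    |hiddenOut ρ dims W b n x k| ≤ (B * (N + 1)) ^ n := by
  induction n with
  | zero => simpa [hiddenOut] using hx k
  | succ n ih =>
    have hM : 1 ≤ B * (N + 1) := by nlinarith [(N.cast_nonneg : (0 : ℝ) ≤ N)]
    calc |hiddenOut ρ dims W b (n + 1) x k|
        ≤ |∑ j, W n k j * hiddenOut ρ dims W b n x j + b n k| :=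
          abs_le_of_lipschitzWith_one hρ hρ0 _
      _ ≤ B * (N + 1) * (B * (N + 1)) ^ n :=
          abs_affine_le (by simpa using hdims n n.lt_succ_self) (by linarith) (one_le_pow₀ hM)
            (hW n n.lt_succ_self k) (hb n n.lt_succ_self k)
            (ih (fun l hl => hdims l (by omega)) (fun l hl => hW l (by omega))
              (fun l hl => hb l (by omega)))
      _ = (B * (N + 1)) ^ (n + 1) := by ring

theorem abs_hiddenOut_sub_le (hρ : LipschitzWith 1 ρ) (hρ0 : ρ 0 = 0) (hB : 1 ≤ B) (hε : 0 ≤ ε)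
    {W₁ W₂ : (l : ℕ) → Fin (dims (l + 1)) → Fin (dims l) → ℝ}
    {b₁ b₂ : (l : ℕ) → Fin (dims (l + 1)) → ℝ}
    {n : ℕ} (hdims : ∀ l < n, dims l ≤ N) (hW₁ : ∀ l < n, ∀ i j, |W₁ l i j| ≤ B)
    (hW₂ : ∀ l < n, ∀ i j, |W₂ l i j| ≤ B) (hb₂ : ∀ l < n, ∀ i, |b₂ l i| ≤ B)
    (hWd : ∀ l < n, ∀ i j, |W₁ l i j - W₂ l i j| ≤ ε) (hbd : ∀ l < n, ∀ i, |b₁ l i - b₂ l i| ≤ ε)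
    (hx : ∀ k, |x k| ≤ 1) (k : Fin (dims n)) :
    |hiddenOut ρ dims W₁ b₁ n x k - hiddenOut ρ dims W₂ b₂ n x k| ≤ n * (B * (N + 1)) ^ n * ε := by
  induction n with
  | zero => simp [hiddenOut]
  | succ n ih =>
    have hM : 1 ≤ B * (N + 1) := by nlinarith [(N.cast_nonneg : (0 : ℝ) ≤ N)]
    have below {p : ℕ → Prop} (h : ∀ l < n + 1, p l) : ∀ l < n, p l := fun l hl => h l (by omega)
    calc |hiddenOut ρ dims W₁ b₁ (n + 1) x k - hiddenOut ρ dims W₂ b₂ (n + 1) x k|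
        ≤ |(∑ j, W₁ n k j * hiddenOut ρ dims W₁ b₁ n x j + b₁ n k)
            - (∑ j, W₂ n k j * hiddenOut ρ dims W₂ b₂ n x j + b₂ n k)| :=
          abs_sub_le_of_lipschitzWith_one hρ _ _
      _ ≤ B * (N + 1) * (n * (B * (N + 1)) ^ n * ε + ε * (B * (N + 1)) ^ n) :=
          abs_affine_sub_affine_le (by simpa using hdims n n.lt_succ_self) hB hε
            (one_le_pow₀ hM) (by positivity) (hW₁ n n.lt_succ_self k) (hWd n n.lt_succ_self k)
            (hbd n n.lt_succ_self k)
            (abs_hiddenOut_le hρ hρ0 hB (below hdims) (below hW₂) (below hb₂) hx)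
            (ih (below hdims) (below hW₁) (below hW₂) (below hb₂) (below hWd) (below hbd))
      _ = (n + 1 : ℕ) * (B * (N + 1)) ^ (n + 1) * ε := by push_cast; ring

end Network

theorem net_param_lipschitz_general (ρ : ℝ → ℝ) (hlip : LipschitzWith 1 ρ) (hρ0 : ρ 0 = 0)
    (dims : ℕ → ℕ) (L N : ℕ) (B ε : ℝ) (hB : 1 ≤ B) (hε : 0 ≤ ε)
    (hdims : ∀ l ≤ L, dims l ≤ N)
    (W₁ W₂ : (l : ℕ) → Fin (dims (l + 1)) → Fin (dims l) → ℝ)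
    (b₁ b₂ : (l : ℕ) → Fin (dims (l + 1)) → ℝ)
    (hW₁ : ∀ l ≤ L, ∀ i j, |W₁ l i j| ≤ B)
    (hW₂ : ∀ l ≤ L, ∀ i j, |W₂ l i j| ≤ B) (hb₂ : ∀ l ≤ L, ∀ i, |b₂ l i| ≤ B)
    (hWd : ∀ l ≤ L, ∀ i j, |W₁ l i j - W₂ l i j| ≤ ε)
    (hbd : ∀ l ≤ L, ∀ i, |b₁ l i - b₂ l i| ≤ ε)
    (x : Fin (dims 0) → ℝ) (hx : ∀ k, x k ∈ Set.Icc (0 : ℝ) 1) :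
    ∀ i, |netOut ρ dims W₁ b₁ L x i - netOut ρ dims W₂ b₂ L x i|
      ≤ (L + 1 : ℝ) * (B * (N + 1)) ^ (L + 1) * ε := by
  intro i
  have hx' : ∀ k, |x k| ≤ 1 := fun k => abs_le.2 ⟨by linarith [(hx k).1], (hx k).2⟩
  have hM : 1 ≤ B * (N + 1) := by nlinarith [(N.cast_nonneg : (0 : ℝ) ≤ N)]
  have below {p : ℕ → Prop} (h : ∀ l ≤ L, p l) : ∀ l < L, p l := fun l hl => h l hl.le
  calc |netOut ρ dims W₁ b₁ L x i - netOut ρ dims W₂ b₂ L x i|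
      ≤ B * (N + 1) * (L * (B * (N + 1)) ^ L * ε + ε * (B * (N + 1)) ^ L) :=
        abs_affine_sub_affine_le (by simpa using hdims L le_rfl) hB hε (one_le_pow₀ hM)
          (by positivity) (hW₁ L le_rfl i) (hWd L le_rfl i) (hbd L le_rfl i)
          (abs_hiddenOut_le hlip hρ0 hB (below hdims) (below hW₂) (below hb₂) hx')
          (abs_hiddenOut_sub_le hlip hρ0 hB hε (below hdims) (below hW₁) (below hW₂) (below hb₂)
            (below hWd) (below hbd) hx')
    _ = (L + 1 : ℝ) * (B * (N + 1)) ^ (L + 1) * ε := by ring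

/-- Lipschitz dependence of a network on its parameters (Lemma 2 of the paper):
if two networks share the same architecture, have parameters bounded by `B ≥ 1` that
differ entrywise by at most `ε`, widths at most `N`, and the activation is 1-Lipschitz
with `ρ 0 = 0`, then the outputs on `[0,1]^d` differ by at most
`(L+1) (B(N+1))^{L+1} ε`. -/
theorem net_param_lipschitz (ρ : ℝ → ℝ) (hlip : LipschitzWith 1 ρ) (hρ0 : ρ 0 = 0)
    (dims : ℕ → ℕ) (L N : ℕ) (B ε : ℝ) (hB : 1 ≤ B) (hε : 0 ≤ ε)
    (hdims : ∀ l ≤ L, dims l ≤ N)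
    (W₁ W₂ : (l : ℕ) → Fin (dims (l + 1)) → Fin (dims l) → ℝ)
    (b₁ b₂ : (l : ℕ) → Fin (dims (l + 1)) → ℝ)
    (hW₁ : ∀ l ≤ L, ∀ i j, |W₁ l i j| ≤ B) (hb₁ : ∀ l ≤ L, ∀ i, |b₁ l i| ≤ B)
    (hW₂ : ∀ l ≤ L, ∀ i j, |W₂ l i j| ≤ B) (hb₂ : ∀ l ≤ L, ∀ i, |b₂ l i| ≤ B)
    (hWd : ∀ l ≤ L, ∀ i j, |W₁ l i j - W₂ l i j| ≤ ε)
    (hbd : ∀ l ≤ L, ∀ i, |b₁ l i - b₂ l i| ≤ ε)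
    (x : Fin (dims 0) → ℝ) (hx : ∀ k, x k ∈ Set.Icc (0 : ℝ) 1) :
    ∀ i, |netOut ρ dims W₁ b₁ L x i - netOut ρ dims W₂ b₂ L x i|
      ≤ (L + 1 : ℝ) * (B * (N + 1)) ^ (L + 1) * ε :=
  net_param_lipschitz_general ρ hlip hρ0 dims L N B ε hB hε hdims W₁ W₂ b₁ b₂ hW₁ hW₂ hb₂ hWd hbd x
    hx
end
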